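/- arXiv:2109.09836 — 9 statements merged into one kernel-verified Lean document; each statement's English description precedes it below -/
import Mathlib

section
/- Let (ε, η) : f ⊣ g be an adjunction in a bicategory, with f : a ⟶ b and g : b ⟶ a. Then the following are equivalent: (1) g is a lax epimorphism; (2) f is fully faithful; (3) the unit η : 𝟙_a ⟶ f ≫ g is invertible. -/
/-!
Whiskering the unit and counit of `f ⊣ g` yields adjunctions between hom-categories:
`postcomp x f ⊣ postcomp x g` and `precomp c g ⊣ precomp c f`, whose units are the
whiskerings `k ◁ η` and `η ▷ k` (up to unitors and associators). A left adjoint functor is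
fully faithful exactly when its unit is invertible, and all whiskerings of `η` are invertible
exactly when `η` is, by whiskering with an identity.
-/

open CategoryTheory Bicategory

universe w v u

/-- A 1-cell `f : a ⟶ b` in a bicategory is a *lax epimorphism* if for every object `c`,
the precomposition functor `(b ⟶ c) ⥤ (a ⟶ c)`, sending `g` to `f ≫ g` and a 2-cell `θ`
to `f ◁ θ`, is full and faithful. -/
def IsLaxEpi {B : Type u} [Bicategory.{w, v} B] {a b : B} (f : a ⟶ b) : Prop :=
  ∀ c : B, (Bicategory.precomp c f).Full ∧ (Bicategory.precomp c f).Faithful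

/-- A 1-cell `f : a ⟶ b` in a bicategory is *fully faithful* if for every object `x`,
the postcomposition functor `(x ⟶ a) ⥤ (x ⟶ b)`, sending `k` to `k ≫ f` and a 2-cell `θ`
to `θ ▷ f`, is full and faithful. -/
def IsFullyFaithful1Cell {B : Type u} [Bicategory.{w, v} B] {a b : B} (f : a ⟶ b) : Prop :=
  ∀ x : B, (Bicategory.postcomp x f).Full ∧ (Bicategory.postcomp x f).Faithful

theorem CategoryTheory.Adjunction.full_and_faithful_iff_isIso_unit {C D : Type*} [Category C]
    [Category D] {L : C ⥤ D} {R : D ⥤ C} (h : L ⊣ R) : L.Full ∧ L.Faithful ↔ IsIso h.unit :=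
  ⟨fun ⟨_, _⟩ => inferInstance, fun _ => ⟨h.fullyFaithfulLOfIsIsoUnit.full,
    h.fullyFaithfulLOfIsIsoUnit.faithful⟩⟩

namespace CategoryTheory.Bicategory

variable {B : Type u} [Bicategory.{w, v} B] {a b : B}

theorem forall_isIso_whiskerLeft_iff {h h' : a ⟶ b} (η : h ⟶ h') :
    (∀ (x : B) (k : x ⟶ a), IsIso (k ◁ η)) ↔ IsIso η := by
  refine ⟨fun hη => ?_, fun _ _ _ => inferInstance⟩
  have := hη a (𝟙 a)
  rw [id_whiskerLeft_symm η]
  infer_instance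

theorem forall_isIso_whiskerRight_iff {h h' : a ⟶ b} (η : h ⟶ h') :
    (∀ (c : B) (k : b ⟶ c), IsIso (η ▷ k)) ↔ IsIso η := by
  refine ⟨fun hη => ?_, fun _ _ _ => inferInstance⟩
  have := hη b (𝟙 b)
  rw [whiskerRight_id_symm η]
  infer_instance

namespace Adjunction

variable {f : a ⟶ b} {g : b ⟶ a}

def postcompAdjunction (adj : f ⊣ g) (x : B) : postcomp x f ⊣ postcomp x g :=
  CategoryTheory.Adjunction.mkOfUnitCounit
    { unit :=
        { app k := (ρ_ k).inv ≫ k ◁ adj.unit ≫ (α_ k f g).inv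
          naturality k₁ k₂ θ := by
            dsimp [postcomp]
            rw [rightUnitor_inv_naturality_assoc, ← whisker_exchange_assoc]
            simp }
      counit :=
        { app k := (α_ k g f).hom ≫ k ◁ adj.counit ≫ (ρ_ k).hom
          naturality k₁ k₂ θ := by
            dsimp [postcomp]
            rw [associator_naturality_left_assoc, ← whisker_exchange_assoc]
            simp }
      left_triangle := by
        ext k
        dsimp [postcomp]
        calc _ = 𝟙 _ ⊗≫ k ◁ leftZigzag adj.unit adj.counit ⊗≫ 𝟙 _ := by bicategory
          _ = _ := by rw [adj.left_triangle]; bicategory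
      right_triangle := by
        ext k
        dsimp [postcomp]
        calc _ = 𝟙 _ ⊗≫ k ◁ rightZigzag adj.unit adj.counit ⊗≫ 𝟙 _ := by bicategory
          _ = _ := by rw [adj.right_triangle]; bicategory }

def precompAdjunction (adj : f ⊣ g) (c : B) : precomp c g ⊣ precomp c f :=
  CategoryTheory.Adjunction.mkOfUnitCounit
    { unit :=
        { app k := (λ_ k).inv ≫ adj.unit ▷ k ≫ (α_ f g k).hom
          naturality k₁ k₂ θ := by
            dsimp [precomp]
            rw [leftUnitor_inv_naturality_assoc, whisker_exchange_assoc]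
            simp }
      counit :=
        { app k := (α_ g f k).inv ≫ adj.counit ▷ k ≫ (λ_ k).hom
          naturality k₁ k₂ θ := by
            dsimp [precomp]
            rw [associator_inv_naturality_right_assoc, whisker_exchange_assoc]
            simp }
      left_triangle := by
        ext k
        dsimp [precomp]
        calc _ = 𝟙 _ ⊗≫ rightZigzag adj.unit adj.counit ▷ k ⊗≫ 𝟙 _ := by bicategory
          _ = _ := by rw [adj.right_triangle]; bicategory
      right_triangle := by
        ext k
        dsimp [precomp]
        calc _ = 𝟙 _ ⊗≫ leftZigzag adj.unit adj.counit ▷ k ⊗≫ 𝟙 _ := by bicategory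
          _ = _ := by rw [adj.left_triangle]; bicategory }

theorem isIso_postcompAdjunction_unit_iff (adj : f ⊣ g) (x : B) :
    IsIso (adj.postcompAdjunction x).unit ↔ ∀ k : x ⟶ a, IsIso (k ◁ adj.unit) := by
  rw [NatTrans.isIso_iff_isIso_app]
  refine forall_congr' fun k => ?_
  change IsIso ((ρ_ k).inv ≫ k ◁ adj.unit ≫ (α_ k f g).inv) ↔ _
  rw [isIso_comp_left_iff, isIso_comp_right_iff]

theorem isIso_precompAdjunction_unit_iff (adj : f ⊣ g) (c : B) :
    IsIso (adj.precompAdjunction c).unit ↔ ∀ k : a ⟶ c, IsIso (adj.unit ▷ k) := by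
  rw [NatTrans.isIso_iff_isIso_app]
  refine forall_congr' fun k => ?_
  change IsIso ((λ_ k).inv ≫ adj.unit ▷ k ≫ (α_ f g k).hom) ↔ _
  rw [isIso_comp_left_iff, isIso_comp_right_iff]

theorem isFullyFaithful1Cell_iff_isIso_unit (adj : f ⊣ g) :
    IsFullyFaithful1Cell f ↔ IsIso adj.unit :=
  calc IsFullyFaithful1Cell f ↔ ∀ x, IsIso (adj.postcompAdjunction x).unit :=
        forall_congr' fun x => (adj.postcompAdjunction x).full_and_faithful_iff_isIso_unit
    _ ↔ ∀ (x : B) (k : x ⟶ a), IsIso (k ◁ adj.unit) :=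
        forall_congr' adj.isIso_postcompAdjunction_unit_iff
    _ ↔ IsIso adj.unit := forall_isIso_whiskerLeft_iff adj.unit

theorem isLaxEpi_iff_isIso_unit (adj : f ⊣ g) : IsLaxEpi g ↔ IsIso adj.unit :=
  calc IsLaxEpi g ↔ ∀ c, IsIso (adj.precompAdjunction c).unit :=
        forall_congr' fun c => (adj.precompAdjunction c).full_and_faithful_iff_isIso_unit
    _ ↔ ∀ (c : B) (k : a ⟶ c), IsIso (adj.unit ▷ k) :=
        forall_congr' adj.isIso_precompAdjunction_unit_iff
    _ ↔ IsIso adj.unit := forall_isIso_whiskerRight_iff adj.unit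

end Adjunction

end CategoryTheory.Bicategory

/-- Given an adjunction `f ⊣ g` in a bicategory, the following are equivalent:
`g` is a lax epimorphism; `f` is fully faithful; the unit is invertible. -/
theorem laxEpi_iff_fullyFaithful_iff_isIso_unit {B : Type u} [Bicategory.{w, v} B]
    {a b : B} {f : a ⟶ b} {g : b ⟶ a} (adj : f ⊣ g) :
    (IsLaxEpi g ↔ IsFullyFaithful1Cell f) ∧ (IsFullyFaithful1Cell f ↔ IsIso adj.unit) :=
  ⟨adj.isLaxEpi_iff_isIso_unit.trans adj.isFullyFaithful1Cell_iff_isIso_unit.symm,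
    adj.isFullyFaithful1Cell_iff_isIso_unit⟩
end

section
/- A group homomorphism f : A →* B is surjective if and only if for every group C, all group homomorphisms g, h : B →* C, and every element γ of C satisfying g(f(x)) * γ = γ * h(f(x)) for all x ∈ A, one has g(y) * γ = γ * h(y) for all y ∈ B. -/
/-!
Surjectivity implies the lax epimorphism property trivially. Conversely, let `B` act on the
coset space `B ⧸ f.range` with one extra fixed point `∞` adjoined, and let `γ` be the
transposition exchanging `∞` and the trivial coset. A permutation fixing `∞` commutes with `γ`
exactly when it fixes the trivial coset, so `y` commutes with `γ` iff `y ∈ f.range`. Applying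
the hypothesis with `g = h` this action therefore gives `f.range = ⊤`.
-/

universe w u v

open Equiv MulAction

theorem Equiv.Perm.commute_swap_iff_apply_eq {α : Type*} [DecidableEq α] {p : Perm α} {a b : α}
    (hb : p b = b) : Commute p (swap a b) ↔ p a = a := by
  refine ⟨fun h => ?_, fun ha => ?_⟩
  · simpa [hb] using congrArg (· b) h.eq
  · have := swap_apply_apply p a b
    rw [ha, hb] at this
    exact (eq_mul_inv_iff_mul_eq.mp this).symm

theorem MulAction.stabilizer_up_some_quotient {B : Type v} [Group B] (H : Subgroup B) :
    stabilizer B (ULift.up.{w} (some ((1 : B) : B ⧸ H))) = H := by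
  ext z
  simp [mem_stabilizer_iff, ULift.ext_iff, QuotientGroup.eq]

/-- A group homomorphism `f : A →* B` is surjective if and only if it is a lax epimorphism
in the 2-category of groups: for every group `C`, all homomorphisms `g h : B →* C` and every
`γ : C` satisfying `g (f x) * γ = γ * h (f x)` for all `x : A`, one has
`g y * γ = γ * h y` for all `y : B`. -/
theorem surjective_iff_laxEpi {A : Type u} {B : Type v} [Group A] [Group B] (f : A →* B) :
    Function.Surjective f ↔
      ∀ (C : Type (max u v w)) [Group C] (g h : B →* C) (γ : C),
        (∀ x : A, g (f x) * γ = γ * h (f x)) → ∀ y : B, g y * γ = γ * h y := by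
  refine ⟨fun hf C _ g h γ hγ y => ?_, fun H y => ?_⟩
  · obtain ⟨x, rfl⟩ := hf y
    exact hγ x
  · classical
    let X := ULift.{max u w} (Option (B ⧸ f.range))
    let a : X := ⟨some (1 : B)⟩
    let b : X := ⟨none⟩
    have hfix (z : B) : toPerm z b = b := rfl
    have hcomm (z : B) : Commute (toPerm z : Perm X) (swap a b) ↔ z ∈ f.range := by
      rw [Perm.commute_swap_iff_apply_eq (hfix z)]
      exact SetLike.ext_iff.mp (stabilizer_up_some_quotient.{max u w} f.range) z
    exact (hcomm y).1 (H (Perm X) (toPermHom B X) (toPermHom B X) (swap a b)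
      (fun x => (hcomm (f x)).2 ⟨x, rfl⟩) y)
end

section
/- Let A and B be preorders and f : A → B a monotone map. Then the following are equivalent: (1) for every preorder C and all monotone maps g, h : B → C, if g(f(a)) ≤ h(f(a)) for all a ∈ A, then g(b) ≤ h(b) for all b ∈ B; (2) every element b ∈ B is isomorphic to f(a) for some a ∈ A, i.e., there exists a ∈ A with b ≤ f(a) and f(a) ≤ b. -/
universe w u v

/-!
If every `b` is isomorphic to some `f a`, then `g b ≤ g (f a) ≤ h (f a) ≤ h b`. Conversely, test the
lax-epi property against the monotone predicates `b ≤ ·` and "lies above some `f a` with `b ≤ f a`":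
they agree on the image of `f`, so the first implies the second at `b` itself, which produces `a`.
-/

def UpperSet.memOrderHom {B : Type*} [Preorder B] (s : UpperSet B) : B →o Prop :=
  ⟨(· ∈ s), fun _ _ hxy hx => s.upper hxy hx⟩

section

variable {A B : Type*} [Preorder A] [Preorder B] {f : A →o B}

theorem OrderHom.le_of_forall_le_comp_of_forall_exists_le_le
    (hf : ∀ b, ∃ a, b ≤ f a ∧ f a ≤ b) {C : Type*} [Preorder C] {g h : B →o C}
    (hgh : ∀ a, g (f a) ≤ h (f a)) (b : B) : g b ≤ h b := by
  obtain ⟨a, hba, hab⟩ := hf b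
  calc g b ≤ g (f a) := g.monotone hba
    _ ≤ h (f a) := hgh a
    _ ≤ h b := h.monotone hab

theorem OrderHom.exists_le_le_of_forall_le_comp
    (hf : ∀ (C : Type w) [Preorder C] (g h : B →o C),
      (∀ a, g (f a) ≤ h (f a)) → ∀ b, g b ≤ h b) (b : B) :
    ∃ a, b ≤ f a ∧ f a ≤ b := by
  let above : UpperSet B := upperClosure (f '' {a | b ≤ f a})
  have hagree : ∀ a, b ≤ f a → f a ∈ above := fun a hba =>
    subset_upperClosure ⟨a, hba, rfl⟩
  have hb : b ∈ above :=
    hf (ULift Prop) (UpperSet.Ici b).memOrderHom.uliftRightMap above.memOrderHom.uliftRightMap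
      hagree b le_rfl
  obtain ⟨_, ⟨a, hba, rfl⟩, hab⟩ := mem_upperClosure.1 hb
  exact ⟨a, hba, hab⟩

end

/-- A monotone map `f : A →o B` between preorders is a lax epimorphism in `Preord`
(i.e. an order-epimorphism) if and only if every `b : B` is isomorphic to `f a`
for some `a : A`. -/
theorem preorder_laxEpi_iff {A : Type u} {B : Type v} [Preorder A] [Preorder B] (f : A →o B) :
    (∀ (C : Type w) [Preorder C] (g h : B →o C),
        (∀ a : A, g (f a) ≤ h (f a)) → ∀ b : B, g b ≤ h b) ↔
      ∀ b : B, ∃ a : A, b ≤ f a ∧ f a ≤ b :=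
  ⟨fun hf => OrderHom.exists_le_le_of_forall_le_comp hf,
    fun hf _ _ _ _ => OrderHom.le_of_forall_le_comp_of_forall_exists_le_le hf⟩
end

section
/- Let J : A ⥤ B be a functor between small categories (categories with objects and hom-sets in universe u). Then J is a lax epimorphism if and only if the precomposition functor (B ⥤ Type u) ⥤ (A ⥤ Type u), sending F to J ⋙ F, is full and faithful. -/
/-!
Full faithfulness of `(whiskeringLeft A B C).obj J` says that the maps
`(F ⟶ G) → (J ⋙ F ⟶ J ⋙ G)` are bijective, and for `F G : B ⥤ C` this holds iff it holds for
`F ⋙ ι, G ⋙ ι`, where `ι : C ⥤ D` is any fully faithful functor. Two functors `B ⥤ Type u`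
factor through the small full subcategory of `Type u` spanned by their values, which gives one
direction. Conversely a small category `C` embeds into `Cᵒᵖ ⥤ Type u` by Yoneda, and after
flipping, whiskering into a functor category is whiskering into `Type u` applied objectwise.
-/

open CategoryTheory Function

universe u

namespace CategoryTheory

def Functor.IsLaxEpi {A B : Type u} [SmallCategory A] [SmallCategory B] (J : A ⥤ B) : Prop :=
  ∀ (C : Type u) [SmallCategory C],
    (((whiskeringLeft A B C).obj J).Full ∧ ((whiskeringLeft A B C).obj J).Faithful)

namespace Functor

theorem full_and_faithful_iff_map_bijective {X Y : Type*} [Category X] [Category Y]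
    (W : X ⥤ Y) : W.Full ∧ W.Faithful ↔ ∀ F G : X, Bijective (W.map : (F ⟶ G) → _) := by
  rw [← FullyFaithful.nonempty_iff_map_bijective]
  exact ⟨fun ⟨_, _⟩ => ⟨.ofFullyFaithful W⟩, fun ⟨h⟩ => ⟨h.full, h.faithful⟩⟩

section

variable {B D : Type*} [Category B] [Category D] (F G : B ⥤ D)

def inducedSumElimInl : B ⥤ InducedCategory D (Sum.elim F.obj G.obj) where
  obj := Sum.inl
  map f := InducedCategory.homMk (F.map f)

def inducedSumElimInr : B ⥤ InducedCategory D (Sum.elim F.obj G.obj) where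
  obj := Sum.inr
  map f := InducedCategory.homMk (G.map f)

end

variable {A B C D : Type*} [Category A] [Category B] [Category C] [Category D] (J : A ⥤ B)

theorem whiskeringLeft_obj_map_bijective_iff_comp {ι : C ⥤ D} (hι : ι.FullyFaithful)
    (F G : B ⥤ C) :
    Bijective (((whiskeringLeft A B C).obj J).map : (F ⟶ G) → _) ↔
      Bijective (((whiskeringLeft A B D).obj J).map : (F ⋙ ι ⟶ G ⋙ ι) → _) := by
  have hsquare : ((whiskeringRight A C D).obj ι).map ∘ ((whiskeringLeft A B C).obj J).map =
      ((whiskeringLeft A B D).obj J).map ∘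
        ((whiskeringRight B C D).obj ι).map (X := F) (Y := G) :=
    rfl
  rw [← ((hι.whiskeringRight A).map_bijective _ _).of_comp_iff', hsquare,
    ((hι.whiskeringRight B).map_bijective F G).of_comp_iff]

def FullyFaithful.whiskeringLeftObjFunctorCategory
    (hJ : ((whiskeringLeft A B D).obj J).FullyFaithful) (K : Type*) [Category K] :
    ((whiskeringLeft A B (K ⥤ D)).obj J).FullyFaithful :=
  (flipping.fullyFaithfulFunctor.comp (hJ.whiskeringRight K)).comp flipping.fullyFaithfulInverse

theorem whiskeringLeft_obj_functorCategory_full_and_faithful (K : Type*) [Category K]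
    (hJ : ((whiskeringLeft A B D).obj J).Full ∧ ((whiskeringLeft A B D).obj J).Faithful) :
    ((whiskeringLeft A B (K ⥤ D)).obj J).Full ∧
      ((whiskeringLeft A B (K ⥤ D)).obj J).Faithful := by
  obtain ⟨_, _⟩ := hJ
  let hK := FullyFaithful.whiskeringLeftObjFunctorCategory (D := D) J (.ofFullyFaithful _) K
  exact ⟨hK.full, hK.faithful⟩

end Functor

/-- A functor `J : A ⥤ B` between small categories is a lax epimorphism if and only if the
precomposition functor `(B ⥤ Type u) ⥤ (A ⥤ Type u)`, `F ↦ J ⋙ F`, is full and faithful. -/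
theorem Functor.isLaxEpi_iff_whiskeringLeft_type {A B : Type u} [SmallCategory A]
    [SmallCategory B] (J : A ⥤ B) :
    J.IsLaxEpi ↔
      (((whiskeringLeft A B (Type u)).obj J).Full ∧
        ((whiskeringLeft A B (Type u)).obj J).Faithful) := by
  refine ⟨fun hJ => ?_, fun hJ C _ => ?_⟩
  · refine (full_and_faithful_iff_map_bijective _).2 fun F G => ?_
    have hpair := (full_and_faithful_iff_map_bijective _).1
      (hJ (InducedCategory (Type u) (Sum.elim F.obj G.obj))) (inducedSumElimInl F G)
      (inducedSumElimInr F G)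
    exact (whiskeringLeft_obj_map_bijective_iff_comp J (fullyFaithfulInducedFunctor _) _ _).1 hpair
  · have hpresheaf := whiskeringLeft_obj_functorCategory_full_and_faithful J Cᵒᵖ hJ
    refine (full_and_faithful_iff_map_bijective _).2 fun F G => ?_
    exact (whiskeringLeft_obj_map_bijective_iff_comp J Yoneda.fullyFaithful F G).2
      ((full_and_faithful_iff_map_bijective _).1 hpresheaf _ _)

end CategoryTheory
end

section
/- Let J : A ⥤ B be a functor between small categories. Then J is a lax epimorphism if and only if the Yoneda embedding Y : B ⥤ (Bᵒᵖ ⥤ Type), together with the identity natural transformation on J ⋙ Y, exhibits Y as a (pointwise) left Kan extension of J ⋙ Y along J. -/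
/-! Whiskering by `J` is bijective on `(M ⟶ N)` for all functors `M, N` out of `B` into a
locally `u`-small category as soon as it is for small targets: `M` and `N` factor fully faithfully
through the small category induced on the objects `M b`, `N b`. Taking the target `Bᵒᵖ ⥤ Type u`
gives the Kan extension property of the Yoneda embedding. Conversely, natural transformations
`M ⟶ N` are, by the Yoneda lemma in each component, the natural transformations from `yoneda` to
`b ↦ (M - ⟶ N b)`, compatibly with whiskering by `J`; so the Kan extension property of `yoneda`
gives bijectivity for `M, N`. -/

open CategoryTheory

universe u

namespace CategoryTheory

universe v

open CategoryTheory.Functor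

section

variable {A B C D : Type*} [Category* A] [Category* B] [Category* C] [Category* D]

lemma Functor.full_and_faithful_iff_map_bijective_s6 (F : C ⥤ D) :
    (F.Full ∧ F.Faithful) ↔ ∀ X Y : C, Function.Bijective (F.map : (X ⟶ Y) → _) := by
  rw [← FullyFaithful.nonempty_iff_map_bijective]
  exact ⟨fun ⟨_, _⟩ => ⟨.ofFullyFaithful F⟩, fun ⟨hF⟩ => ⟨hF.full, hF.faithful⟩⟩

lemma Functor.isLeftKanExtension_iff_bijective {J : A ⥤ B} {K : A ⥤ C} (L : B ⥤ C)
    (α : K ⟶ J ⋙ L) :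
    L.IsLeftKanExtension α ↔
      ∀ M : B ⥤ C, Function.Bijective fun γ : L ⟶ M => α ≫ whiskerLeft J γ := by
  refine ⟨fun _ M => (L.homEquivOfIsLeftKanExtension α M).bijective, fun h => ⟨⟨?_⟩⟩⟩
  refine Limits.IsInitial.ofUniqueHom
    (fun M => StructuredArrow.homMk ((h M.right).2 M.hom).choose
      ((h M.right).2 M.hom).choose_spec) fun M γ => ?_
  ext1
  exact (h M.right).1 (γ.w.trans ((h M.right).2 M.hom).choose_spec.symm)

lemma bijective_whiskerLeft_comp_iff (J : A ⥤ B) {R : C ⥤ D} (hR : R.FullyFaithful)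
    (M N : B ⥤ C) :
    Function.Bijective (fun γ : M ⋙ R ⟶ N ⋙ R => whiskerLeft J γ) ↔
      Function.Bijective (fun γ : M ⟶ N => whiskerLeft J γ) := by
  rw [← Equiv.bijective_comp (hR.whiskeringRight B).homEquiv,
    ← Equiv.comp_bijective (fun γ : M ⟶ N => whiskerLeft J γ) (hR.whiskeringRight A).homEquiv]
  rfl

end

lemma Functor.IsLaxEpi.bijective_whiskerLeft {A B : Type u} [SmallCategory A] [SmallCategory B]
    {J : A ⥤ B} (hJ : J.IsLaxEpi) {D : Type*} [Category.{u} D] (M N : B ⥤ D) :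
    Function.Bijective fun γ : M ⟶ N => whiskerLeft J γ := by
  let obj : B ⊕ B → D := Sum.elim M.obj N.obj
  let M' : B ⥤ InducedCategory D obj :=
    { obj := Sum.inl
      map f := InducedCategory.homMk (M.map f)
      map_id b := InducedCategory.hom_ext (M.map_id b)
      map_comp f g := InducedCategory.hom_ext (M.map_comp f g) }
  let N' : B ⥤ InducedCategory D obj :=
    { obj := Sum.inr
      map f := InducedCategory.homMk (N.map f)
      map_id b := InducedCategory.hom_ext (N.map_id b)
      map_comp f g := InducedCategory.hom_ext (N.map_comp f g) }
  exact (bijective_whiskerLeft_comp_iff J (fullyFaithfulInducedFunctor obj) M' N').2 <|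
    (full_and_faithful_iff_map_bijective_s6 _).1 (hJ (InducedCategory D obj)) M' N'

section

variable {X B C : Type*} [Category* X] [Category.{v} B] [Category.{v} C]

-- `(homPresheaf M N).obj x` is the presheaf `b ↦ (M.obj b ⟶ N.obj x)`.
abbrev homPresheaf (M : B ⥤ C) (N : X ⥤ C) : X ⥤ Bᵒᵖ ⥤ Type v :=
  N ⋙ yoneda ⋙ (whiskeringLeft Bᵒᵖ Cᵒᵖ (Type v)).obj M.op

def yonedaHomEquiv (K : X ⥤ B) (M : B ⥤ C) (N : X ⥤ C) :
    (K ⋙ M ⟶ N) ≃ (K ⋙ yoneda ⟶ homPresheaf M N) where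
  toFun φ :=
    { app x := yonedaEquiv.symm (φ.app x : M.obj (K.obj x) ⟶ N.obj x)
      naturality x y f := by
        rw [yonedaEquiv_symm_naturality_right, Functor.comp_map,
          yonedaEquiv_symm_naturality_left]
        exact congrArg _ (φ.naturality f) }
  invFun α :=
    { app x := yonedaEquiv (α.app x)
      naturality x y f := by
        have := congrArg yonedaEquiv (α.naturality f)
        rw [yonedaEquiv_comp, yonedaEquiv_comp, Functor.comp_map, yonedaEquiv_yoneda_map,
          ← map_yonedaEquiv] at this
        simpa using this }
  left_inv φ := by ext; exact yonedaEquiv.apply_symm_apply _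
  right_inv α := NatTrans.ext (funext fun x => yonedaEquiv.symm_apply_apply (α.app x))

lemma bijective_whiskerLeft_of_bijective_yoneda {A : Type*} [Category* A] (J : A ⥤ B)
    (M N : B ⥤ C)
    (h : Function.Bijective fun γ : (yoneda : B ⥤ _) ⟶ homPresheaf M N => whiskerLeft J γ) :
    Function.Bijective fun γ : M ⟶ N => whiskerLeft J γ := by
  -- Both `yonedaHomEquiv`s act componentwise, so they commute with whiskering by `J` by `rfl`.
  rw [← Equiv.comp_bijective _ (yonedaHomEquiv J M (J ⋙ N))]
  exact (Equiv.bijective_comp (yonedaHomEquiv (𝟭 B) M N) _).2 h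

end

/-- A functor `J : A ⥤ B` between small categories is a lax epimorphism if and only if the
Yoneda embedding `Y : B ⥤ (Bᵒᵖ ⥤ Type u)`, together with the identity natural transformation
on `J ⋙ Y`, exhibits `Y` as a left Kan extension of `J ⋙ Y` along `J`. -/
theorem Functor.isLaxEpi_iff_yoneda_isLeftKanExtension {A B : Type u} [SmallCategory A]
    [SmallCategory B] (J : A ⥤ B) :
    J.IsLaxEpi ↔
      yoneda.IsLeftKanExtension ((𝟙 (J ⋙ yoneda)) : J ⋙ yoneda ⟶ J ⋙ yoneda) := by
  simp only [isLeftKanExtension_iff_bijective, Category.id_comp]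
  refine ⟨fun hJ G => hJ.bijective_whiskerLeft yoneda G, fun h C _ => ?_⟩
  exact (full_and_faithful_iff_map_bijective_s6 _).2 fun M N =>
    bijective_whiskerLeft_of_bijective_yoneda J M N (h _)

end CategoryTheory
end

section
/- Let J : A ⥤ B be a functor between small categories (with objects and hom-sets in universe u). Then the precomposition functor (B ⥤ Type u) ⥤ (A ⥤ Type u) is full and faithful if and only if for every category C, of arbitrary (possibly larger) universe, the precomposition functor (B ⥤ C) ⥤ (A ⥤ C) is full and faithful. -/
open CategoryTheory

universe w v u

/-!
If precomposition with `J` is fully faithful on functors to types, then for every `b₀` the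
canonical map from the left Kan extension of `J ⋙ B(b₀, -)` to `B(b₀, -)` is invertible. Read
pointwise, every morphism `b₀ ⟶ b` factors through some `J a`, and any two such factorizations are
connected by a zigzag of morphisms of `A`. These two facts extend any `α : J ⋙ F ⟶ J ⋙ G` to
`F ⟶ G` for an arbitrary target category: split `𝟙 b` as `b ⟶ J a ⟶ b` and take
`F b ⟶ F (J a) ⟶ G (J a) ⟶ G b`, which does not depend on the splitting by connectedness.
Conversely, any two functors `B ⥤ Type u` factor through a fully faithful inclusion of a
category of the size allowed in the hypothesis, and precomposition commutes with postcomposition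
by such an inclusion.
-/

namespace CategoryTheory

open Opposite

section

variable {A B : Type*} [Category A] [Category B]

structure FactorizationThrough (J : A ⥤ B) (b₀ b : B) where
  obj : A
  left : b₀ ⟶ J.obj obj
  right : J.obj obj ⟶ b

namespace FactorizationThrough

variable {J : A ⥤ B} {b₀ b : B}

def comp (e : FactorizationThrough J b₀ b) : b₀ ⟶ b := e.left ≫ e.right

def Rel (e e' : FactorizationThrough J b₀ b) : Prop :=
  ∃ t : e.obj ⟶ e'.obj, e'.left = e.left ≫ J.map t ∧ e.right = J.map t ≫ e'.right

lemma comp_eq_of_rel {e e' : FactorizationThrough J b₀ b} (h : Rel e e') :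
    e.comp = e'.comp := by
  obtain ⟨t, hl, hr⟩ := h
  simp [comp, hl, hr]

def postcomp {b' : B} (h : b ⟶ b') (e : FactorizationThrough J b₀ b) :
    FactorizationThrough J b₀ b' :=
  ⟨e.obj, e.left, e.right ≫ h⟩

lemma postcomp_id (e : FactorizationThrough J b₀ b) : e.postcomp (𝟙 b) = e := by
  simp [postcomp]

lemma postcomp_comp {b' b'' : B} (h : b ⟶ b') (h' : b' ⟶ b'')
    (e : FactorizationThrough J b₀ b) :
    e.postcomp (h ≫ h') = (e.postcomp h).postcomp h' := by
  simp [postcomp]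

lemma rel_postcomp {b' : B} (h : b ⟶ b') {e e' : FactorizationThrough J b₀ b}
    (hr : Rel e e') :
    Rel (e.postcomp h) (e'.postcomp h) := by
  obtain ⟨t, hl, hr⟩ := hr
  exact ⟨t, hl, by simp [postcomp, hr]⟩

variable {C : Type*} [Category C] {F G : B ⥤ C}

def app (α : J ⋙ F ⟶ J ⋙ G) (e : FactorizationThrough J b₀ b) : F.obj b₀ ⟶ G.obj b :=
  F.map e.left ≫ α.app e.obj ≫ G.map e.right

lemma app_whiskerLeft (β : F ⟶ G) (e : FactorizationThrough J b₀ b) :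
    e.app (Functor.whiskerLeft J β) = F.map e.comp ≫ β.app b := by
  simp [app, comp]

lemma app_eq_of_rel (α : J ⋙ F ⟶ J ⋙ G) {e e' : FactorizationThrough J b₀ b}
    (h : Rel e e') :
    e.app α = e'.app α := by
  obtain ⟨t, hl, hr⟩ := h
  simp only [app, hl, hr, F.map_comp, G.map_comp, Category.assoc]
  have hnat : F.map (J.map t) ≫ α.app e'.obj = α.app e.obj ≫ G.map (J.map t) := α.naturality t
  rw [reassoc_of% hnat]

lemma app_eq_of_quot_eq (α : J ⋙ F ⟶ J ⋙ G) {e e' : FactorizationThrough J b₀ b}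
    (h : Quot.mk Rel e = Quot.mk Rel e') : e.app α = e'.app α :=
  congrArg (Quot.lift (app α) fun _ _ => app_eq_of_rel α) h

end FactorizationThrough

open FactorizationThrough

variable (J : A ⥤ B) {C : Type*} [Category C]

lemma whiskeringLeft_obj_faithful_of_id_factors
    (hid : ∀ b : B, ∃ e : FactorizationThrough J b b, e.comp = 𝟙 b) :
    ((Functor.whiskeringLeft A B C).obj J).Faithful where
  map_injective {F G} β γ hβγ := by
    ext b
    obtain ⟨e, he⟩ := hid b
    simpa [app_whiskerLeft, he] using congrArg e.app hβγ

lemma whiskeringLeft_obj_full_of_id_factors_of_connected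
    (hid : ∀ b : B, ∃ e : FactorizationThrough J b b, e.comp = 𝟙 b)
    (hconn : ∀ {b₀ b : B} (e e' : FactorizationThrough J b₀ b),
      e.comp = e'.comp → Quot.mk FactorizationThrough.Rel e = Quot.mk FactorizationThrough.Rel e') :
    ((Functor.whiskeringLeft A B C).obj J).Full where
  map_surjective {F G} α := by
    choose s hs using hid
    simp only [comp] at hs
    refine ⟨{ app b := (s b).app α, naturality := fun b b' h => ?_ }, ?_⟩
    · have := app_eq_of_quot_eq α <| hconn
        ⟨(s b').obj, h ≫ (s b').left, (s b').right⟩ ((s b).postcomp h)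
        (by simp [comp, postcomp, hs, reassoc_of% hs])
      simpa [app, postcomp] using this
    · ext a
      have := app_eq_of_quot_eq α <|
        hconn (s (J.obj a)) ⟨a, 𝟙 _, 𝟙 _⟩ (by simp [comp, hs])
      simpa [app] using this

end

section

open FactorizationThrough

variable {A B : Type u} [SmallCategory A] [SmallCategory B] (J : A ⥤ B) (b₀ : B)

/-- The pointwise left Kan extension of `J ⋙ coyoneda.obj (op b₀)` along `J`. -/
def factorizationClasses : B ⥤ Type u where
  obj b := Quot (α := FactorizationThrough J b₀ b) FactorizationThrough.Rel
  map h := TypeCat.ofHom (Quot.map (postcomp h) fun _ _ => rel_postcomp h)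
  map_id b := by
    ext x
    induction x using Quot.ind
    exact congrArg (Quot.mk _) (postcomp_id _)
  map_comp h h' := by
    ext x
    induction x using Quot.ind
    exact congrArg (Quot.mk _) (postcomp_comp h h' _)

def factorizationClassesComp : factorizationClasses J b₀ ⟶ coyoneda.obj (op b₀) where
  app b := TypeCat.ofHom (Quot.lift comp fun _ _ => comp_eq_of_rel)
  naturality b b' h := by
    ext x
    induction x using Quot.ind
    exact (Category.assoc _ _ _).symm

def factorizationClassesUnit : J ⋙ coyoneda.obj (op b₀) ⟶ J ⋙ factorizationClasses J b₀ where
  app a := TypeCat.ofHom fun g => Quot.mk _ ⟨a, g, 𝟙 _⟩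
  naturality a a' t := by
    ext g
    exact (Quot.sound ⟨t, rfl, by simp [postcomp]⟩).symm

variable [((Functor.whiskeringLeft A B (Type u)).obj J).Full]
  [((Functor.whiskeringLeft A B (Type u)).obj J).Faithful]

instance isIso_factorizationClassesComp : IsIso (factorizationClassesComp J b₀) := by
  obtain ⟨δ, hδ⟩ := Functor.map_surjective ((Functor.whiskeringLeft A B (Type u)).obj J)
    (factorizationClassesUnit J b₀)
  refine ⟨δ, ?_, ?_⟩
  · ext b x
    induction x using Quot.ind with | mk e => ?_
    have hδe : δ.app (J.obj e.obj) e.left = Quot.mk _ ⟨e.obj, e.left, 𝟙 _⟩ :=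
      congrArg (fun γ => γ.app e.obj e.left) hδ
    change δ.app b (e.left ≫ e.right) = Quot.mk FactorizationThrough.Rel e
    refine (congrArg (fun γ => γ e.left) (δ.naturality e.right)).trans ?_
    change (factorizationClasses J b₀).map e.right (δ.app (J.obj e.obj) e.left) = _
    rw [hδe]
    exact congrArg (Quot.mk _) (by simp [postcomp])
  · apply Functor.map_injective ((Functor.whiskeringLeft A B (Type u)).obj J)
    rw [Functor.map_comp, hδ]
    ext a g
    exact Category.comp_id g

lemma FactorizationThrough.exists_comp_eq_id_of_whiskeringLeft (b : B) :
    ∃ e : FactorizationThrough J b b, e.comp = 𝟙 b := by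
  obtain ⟨x, hx⟩ := ((isIso_iff_bijective ((factorizationClassesComp J b).app b)).mp
    inferInstance).2 (𝟙 b)
  induction x using Quot.ind with | mk e => exact ⟨e, hx⟩

lemma FactorizationThrough.quot_eq_of_comp_eq_of_whiskeringLeft {b : B}
    (e e' : FactorizationThrough J b₀ b) (h : e.comp = e'.comp) :
    Quot.mk FactorizationThrough.Rel e = Quot.mk FactorizationThrough.Rel e' :=
  ((isIso_iff_bijective ((factorizationClassesComp J b₀).app b)).mp inferInstance).1 h

end

lemma whiskeringLeft_obj_map_bijective_of_fullyFaithful {A B C D : Type*} [Category A]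
    [Category B] [Category C] [Category D] (J : A ⥤ B)
    [((Functor.whiskeringLeft A B C).obj J).Full]
    [((Functor.whiskeringLeft A B C).obj J).Faithful] {ι : C ⥤ D} (hι : ι.FullyFaithful) (F G : B ⥤ C) :
    Function.Bijective (((Functor.whiskeringLeft A B D).obj J).map : (F ⋙ ι ⟶ G ⋙ ι) → _) := by
  rw [← Function.Bijective.of_comp_iff _ ((hι.whiskeringRight B).map_bijective F G)]
  exact ((hι.whiskeringRight A).map_bijective (J ⋙ F) (J ⋙ G)).comp
    ((Functor.FullyFaithful.ofFullyFaithful ((Functor.whiskeringLeft A B C).obj J)).map_bijective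
      F G)

section

variable {B : Type u} [SmallCategory B] (F G : B ⥤ Type u)

/-- A full subcategory of `Type u` containing the values of `F` and `G`, small enough to have
objects in `Type (max u w)` and morphisms in `Type (max u v)`. -/
abbrev ValuesCategory : Type (max u w) :=
  ULiftHom.{v}
    (InducedCategory (Type u) fun x : ULift.{w} (Bool × B) => (cond x.down.1 F G).obj x.down.2)

def ValuesCategory.ι : ValuesCategory.{w, v} F G ⥤ Type u :=
  ULiftHom.down ⋙ inducedFunctor _

def ValuesCategory.fullyFaithfulι : (ValuesCategory.ι.{w, v} F G).FullyFaithful :=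
  ULiftHom.equiv.fullyFaithfulInverse.comp (fullyFaithfulInducedFunctor _)

def ValuesCategory.lift (s : Bool) : B ⥤ ValuesCategory.{w, v} F G where
  obj b := ULiftHom.objUp ⟨(s, b)⟩
  map f := ⟨InducedCategory.homMk ((cond s F G).map f)⟩
  map_id b := congrArg ULift.up (InducedCategory.hom_ext ((cond s F G).map_id b))
  map_comp f g := congrArg ULift.up (InducedCategory.hom_ext ((cond s F G).map_comp f g))

end

end CategoryTheory

/-- For a functor `J : A ⥤ B` between small categories, the precomposition functor
`(B ⥤ Type u) ⥤ (A ⥤ Type u)` is full and faithful if and only if for every category `C`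
of arbitrary (possibly larger) universe, the precomposition functor `(B ⥤ C) ⥤ (A ⥤ C)`
is full and faithful. -/
theorem whiskeringLeft_type_full_faithful_iff_all {A B : Type u} [SmallCategory A]
    [SmallCategory B] (J : A ⥤ B) :
    (((Functor.whiskeringLeft A B (Type u)).obj J).Full ∧
        ((Functor.whiskeringLeft A B (Type u)).obj J).Faithful) ↔
      ∀ (C : Type (max u w)) [Category.{max u v} C],
        (((Functor.whiskeringLeft A B C).obj J).Full ∧ ((Functor.whiskeringLeft A B C).obj J).Faithful) := by
  constructor
  · rintro ⟨_, _⟩ C _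
    have hid := FactorizationThrough.exists_comp_eq_id_of_whiskeringLeft J
    exact ⟨whiskeringLeft_obj_full_of_id_factors_of_connected J hid
        (FactorizationThrough.quot_eq_of_comp_eq_of_whiskeringLeft J _),
      whiskeringLeft_obj_faithful_of_id_factors J hid⟩
  · intro h
    have hbij (F G : B ⥤ Type u) :
        Function.Bijective (((Functor.whiskeringLeft A B (Type u)).obj J).map : (F ⟶ G) → _) := by
      obtain ⟨_, _⟩ := h (ValuesCategory.{w, v} F G)
      exact whiskeringLeft_obj_map_bijective_of_fullyFaithful J
        (ValuesCategory.fullyFaithfulι F G) (ValuesCategory.lift F G true)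
        (ValuesCategory.lift F G false)
    exact ⟨⟨(hbij _ _).2⟩, ⟨fun h => (hbij _ _).1 h⟩⟩
end

section
/- A functor J : A ⥤ B between small categories is a lax epimorphism if and only if J is absolutely codense, i.e.: (i) the identity functor 𝟭_B, together with the identity natural transformation on J, is a right Kan extension of J along J; and (ii) this right Kan extension is preserved by every functor into Type: for every functor F : B ⥤ Type, the functor F together with the identity natural transformation on J ⋙ F is a right Kan extension of J ⋙ F along J. -/
open CategoryTheory

universe u

/-!
Full faithfulness of precomposition with `J` on the maps `M ⟶ F` is exactly the universal
property of `(F, 𝟙)` as a right Kan extension of `J ⋙ F` along `J`; so absolute codensity says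
that precomposition with `J` is fully faithful into `B` and into `Type u`. Since `Type u` is not
small, the forward direction passes to the small full subcategory on the objects `M b` and `F b`.
Conversely, full faithfulness into `Type u` extends to presheaf categories `Cᵒᵖ ⥤ Type u` by
flipping variables, and then to every small `C` through its Yoneda embedding.
-/

namespace CategoryTheory

section

variable {C D H : Type*} [Category C] [Category D] [Category H]

lemma Functor.isRightKanExtension_iff_bijective (F' : D ⥤ H) {L : C ⥤ D} {F : C ⥤ H}
    (α : L ⋙ F' ⟶ F) :
    F'.IsRightKanExtension α ↔
      ∀ G : D ⥤ H, Function.Bijective fun β : G ⟶ F' => whiskerLeft L β ≫ α := by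
  refine ⟨fun _ G => (F'.homEquivOfIsRightKanExtension α G).bijective, fun h => ⟨⟨?_⟩⟩⟩
  let e G := Equiv.ofBijective _ (h G)
  refine Limits.IsTerminal.ofUniqueHom
    (fun G => CostructuredArrow.homMk ((e G.left).symm G.hom) ((e G.left).apply_symm_apply _))
    (fun G m => CostructuredArrow.hom_ext _ _ ((e G.left).eq_symm_apply.2 ?_))
  exact CostructuredArrow.w m

end

section

variable {A B : Type*} [Category A] [Category B] (J : A ⥤ B)

lemma Functor.isRightKanExtension_id_iff {H : Type*} [Category H] (F : B ⥤ H) :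
    F.IsRightKanExtension (𝟙 (J ⋙ F)) ↔
      ∀ M : B ⥤ H, Function.Bijective (((whiskeringLeft A B H).obj J).map : (M ⟶ F) → _) := by
  simp only [isRightKanExtension_iff_bijective, Category.comp_id]
  rfl

lemma Functor.nonempty_fullyFaithful_whiskeringLeft_iff (H : Type*) [Category H] :
    Nonempty ((whiskeringLeft A B H).obj J).FullyFaithful ↔
      ∀ F : B ⥤ H, F.IsRightKanExtension (𝟙 (J ⋙ F)) := by
  simp only [FullyFaithful.nonempty_iff_map_bijective, isRightKanExtension_id_iff]
  exact forall_comm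

lemma Functor.whiskeringLeft_map_bijective_iff_of_fullyFaithful {C D : Type*} [Category C]
    [Category D] {ι : C ⥤ D} (hι : ι.FullyFaithful) (M F : B ⥤ C) :
    Function.Bijective (((whiskeringLeft A B C).obj J).map : (M ⟶ F) → _) ↔
      Function.Bijective (((whiskeringLeft A B D).obj J).map : (M ⋙ ι ⟶ F ⋙ ι) → _) := by
  have comm : ((whiskeringRight A C D).obj ι).map ∘
      ((whiskeringLeft A B C).obj J).map (X := M) (Y := F) =
      ((whiskeringLeft A B D).obj J).map ∘ ((whiskeringRight B C D).obj ι).map := rfl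
  rw [← Function.Bijective.of_comp_iff' ((hι.whiskeringRight A).map_bijective _ _), comm,
    Function.Bijective.of_comp_iff _ ((hι.whiskeringRight B).map_bijective _ _)]

def Functor.FullyFaithful.whiskeringLeftFunctorCategory {E : Type*} [Category E]
    (hE : ((whiskeringLeft A B E).obj J).FullyFaithful) (D : Type*) [Category D] :
    ((whiskeringLeft A B (D ⥤ E)).obj J).FullyFaithful :=
  have flip_comm : flipping.functor ⋙
      (Functor.whiskeringRight D _ _).obj ((whiskeringLeft A B E).obj J) ≅
      (whiskeringLeft A B (D ⥤ E)).obj J ⋙ flipping.functor := Iso.refl _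
  .ofCompFaithful ((flipping.fullyFaithfulFunctor.comp (hE.whiskeringRight D)).ofIso flip_comm)

end

section

variable {A B : Type u} [SmallCategory A] [SmallCategory B] {J : A ⥤ B}

lemma Functor.IsLaxEpi.whiskeringLeft_map_bijective (hJ : J.IsLaxEpi) {D : Type*}
    [Category.{u} D] (M F : B ⥤ D) :
    Function.Bijective (((whiskeringLeft A B D).obj J).map : (M ⟶ F) → _) := by
  let C := InducedCategory D (Sum.elim M.obj F.obj)
  let M' : B ⥤ C := { obj := Sum.inl, map f := InducedCategory.homMk (M.map f) }
  let F' : B ⥤ C := { obj := Sum.inr, map f := InducedCategory.homMk (F.map f) }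
  obtain ⟨_, _⟩ := hJ C
  exact (whiskeringLeft_map_bijective_iff_of_fullyFaithful J (fullyFaithfulInducedFunctor _)
    M' F').1 ((FullyFaithful.ofFullyFaithful _).map_bijective M' F')

lemma Functor.isLaxEpi_of_fullyFaithful_whiskeringLeft_type
    (hJ : ((whiskeringLeft A B (Type u)).obj J).FullyFaithful) : J.IsLaxEpi := by
  intro C _
  have hPsh := hJ.whiskeringLeftFunctorCategory J Cᵒᵖ
  obtain ⟨hC⟩ : Nonempty ((whiskeringLeft A B C).obj J).FullyFaithful :=
    (FullyFaithful.nonempty_iff_map_bijective _).2 fun M F =>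
      (whiskeringLeft_map_bijective_iff_of_fullyFaithful J Yoneda.fullyFaithful M F).2
        (hPsh.map_bijective _ _)
  exact ⟨hC.full, hC.faithful⟩

end

/-- A functor `J : A ⥤ B` between small categories is a lax epimorphism if and only if it is
*absolutely codense*: the identity functor of `B` (with the identity transformation on `J`,
encoded via the right unitor `J ⋙ 𝟭 B ≅ J`) is a right Kan extension of `J` along `J`, and
this right Kan extension is preserved by every functor `F : B ⥤ Type u`, i.e. `F` together
with the identity transformation on `J ⋙ F` is a right Kan extension of `J ⋙ F` along `J`. -/
theorem Functor.isLaxEpi_iff_absolutely_codense {A B : Type u} [SmallCategory A]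
    [SmallCategory B] (J : A ⥤ B) :
    J.IsLaxEpi ↔
      ((𝟭 B).IsRightKanExtension ((J.rightUnitor).hom : J ⋙ 𝟭 B ⟶ J) ∧
        ∀ F : B ⥤ Type u,
          F.IsRightKanExtension ((𝟙 (J ⋙ F)) : J ⋙ F ⟶ J ⋙ F)) := by
  refine ⟨fun hJ => ⟨?_, fun F => ?_⟩, fun ⟨_, hType⟩ => ?_⟩
  -- `J.rightUnitor.hom` is definitionally `𝟙 (J ⋙ 𝟭 B)`.
  · exact (isRightKanExtension_id_iff J (𝟭 B)).2 fun M => hJ.whiskeringLeft_map_bijective M _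
  · exact (isRightKanExtension_id_iff J F).2 fun M => hJ.whiskeringLeft_map_bijective M F
  · exact isLaxEpi_of_fullyFaithful_whiskeringLeft_type
      ((nonempty_fullyFaithful_whiskeringLeft_iff J _).2 hType).some

end CategoryTheory
end

section
/- Let F : B ⥤ A and G : A ⥤ B be functors with an adjunction F ⊣ G. Then G is fully faithful if and only if there exists some natural isomorphism G ⋙ F ≅ 𝟭_A (not necessarily the counit). -/
open CategoryTheory

universe v₁ v₂ u₁ u₂

/-- Given an adjunction `F ⊣ G` with `F : B ⥤ A` and `G : A ⥤ B`, the functor `G` is fully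
faithful if and only if there exists some natural isomorphism `G ⋙ F ≅ 𝟭 A`
(not necessarily the counit). -/
theorem fullyFaithful_right_adjoint_iff_nonempty_iso {A : Type u₁} {B : Type u₂}
    [Category.{v₁} A] [Category.{v₂} B] {F : B ⥤ A} {G : A ⥤ B} (adj : F ⊣ G) :
    (G.Full ∧ G.Faithful) ↔ Nonempty (G ⋙ F ≅ 𝟭 A) := by
  constructor
  · rintro ⟨_, _⟩
    exact ⟨asIso adj.counit⟩
  · rintro ⟨j⟩
    let hG := adj.fullyFaithfulROfCompIsoId j
    exact ⟨hG.full, hG.faithful⟩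
end

section
/- Every discrete splitting bifibration P : 𝔼 ⥤ B is (1) faithful, (2) conservative (it reflects isomorphisms), and (3) reflects identities: whenever f : d ⟶ e in 𝔼 is such that P d = P e and P f equals the identity morphism of P d (modulo this object equality), then d = e and f is the identity of d. -/
open CategoryTheory

universe u

namespace CategoryTheory

variable {E B : Type u} [Category.{u} E] [Category.{u} B]

/-- Objects of the factorization category `g ↓↓ P`: factorizations `b ⟶ P e ⟶ c` of `g`. -/
structure FactObj (P : E ⥤ B) {b c : B} (g : b ⟶ c) where
  pt : E
  h : b ⟶ P.obj pt
  k : P.obj pt ⟶ c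
  fac : h ≫ k = g

/-- The factorization category `g ↓↓ P`. -/
instance FactObj.category (P : E ⥤ B) {b c : B} (g : b ⟶ c) : Category (FactObj P g) where
  Hom x y := { u : x.pt ⟶ y.pt // x.h ≫ P.map u = y.h ∧ P.map u ≫ y.k = x.k }
  id x := ⟨𝟙 x.pt, by simp, by simp⟩
  comp {x y z} u v := ⟨u.1 ≫ v.1,
    by rw [Functor.map_comp, ← Category.assoc, u.2.1, v.2.1],
    by rw [Functor.map_comp, Category.assoc, v.2.2, u.2.2]⟩
  id_comp f := Subtype.ext (by simp)
  comp_id f := Subtype.ext (by simp)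
  assoc f g h := Subtype.ext (by simp)

/-- A `P`-split of `b`: a factorization `b ⟶ P e ⟶ b` of the identity such that
`(e, 𝟙, h ∘ k)` and `(e, h ∘ k, 𝟙)` are connected in the factorization category
`(h ∘ k) ↓↓ P`. -/
def IsPSplit (P : E ⥤ B) {b : B} (e : E) (h : b ⟶ P.obj e) (k : P.obj e ⟶ b) : Prop :=
  h ≫ k = 𝟙 b ∧
    Zigzag (J := FactObj P (k ≫ h))
      ⟨e, 𝟙 (P.obj e), k ≫ h, Category.id_comp _⟩
      ⟨e, k ≫ h, 𝟙 (P.obj e), Category.comp_id _⟩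

/-- A lift of a `P`-split diagram, as in the definition of a discrete splitting
bifibration. -/
structure SplitLift (P : E ⥤ B) {b c : B} (g : b ⟶ c) {e e' : E}
    (h : b ⟶ P.obj e) (k : P.obj e ⟶ b) (h' : c ⟶ P.obj e') (k' : P.obj e' ⟶ c) where
  b₀ : E
  c₀ : E
  h₀ : b₀ ⟶ e
  k₀ : e ⟶ b₀
  g₀ : b₀ ⟶ c₀
  h₀' : c₀ ⟶ e'
  k₀' : e' ⟶ c₀
  hb : P.obj b₀ = b
  hc : P.obj c₀ = c
  map_h₀ : P.map h₀ = eqToHom hb ≫ h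
  map_k₀ : P.map k₀ = k ≫ eqToHom hb.symm
  map_g₀ : P.map g₀ = eqToHom hb ≫ g ≫ eqToHom hc.symm
  map_h₀' : P.map h₀' = eqToHom hc ≫ h'
  map_k₀' : P.map k₀' = k' ≫ eqToHom hc.symm
  comm : h₀ ≫ k₀ ≫ g₀ = g₀ ≫ h₀' ≫ k₀'

/-- A functor `P : E ⥤ B` is a *discrete splitting bifibration* if every `P`-split diagram
(a morphism `g : b ⟶ c`, a `P`-split of `b` and a `P`-split of `c`, suitably connected in
`g ↓↓ P`) admits a unique lift. -/
def IsDSB (P : E ⥤ B) : Prop :=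
  ∀ {b c : B} (g : b ⟶ c) {e e' : E} (h : b ⟶ P.obj e) (k : P.obj e ⟶ b)
    (h' : c ⟶ P.obj e') (k' : P.obj e' ⟶ c)
    (hsp : IsPSplit P e h k) (hsp' : IsPSplit P e' h' k'),
    Zigzag (J := FactObj P g)
      ⟨e, h, k ≫ g, by rw [← Category.assoc, hsp.1, Category.id_comp]⟩
      ⟨e', g ≫ h', k', by rw [Category.assoc, hsp'.1, Category.comp_id]⟩ →
    ∃ L : SplitLift P g h k h' k', ∀ L' : SplitLift P g h k h' k', L' = L

end CategoryTheory

/-!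
Against the identity splits of its source and target, a morphism `f` of `E` lifts the split
diagram over `P f`, so uniqueness of lifts makes `P` faithful. If `P f` is invertible, then `f`
itself connects the split diagram over `(P f)⁻¹` backwards, so `(P f)⁻¹` lifts as well and, by
faithfulness, `f` is an isomorphism. Finally, if `P f` is an identity, `f` is an isomorphism and
`(𝟙, 𝟙, f, f⁻¹, f)` lifts the identity diagram of `P d` alongside the trivial lift; uniqueness
identifies the two, forcing `d = e` and `f = 𝟙`.
-/

namespace CategoryTheory

variable {E B : Type u} [Category.{u} E] [Category.{u} B] {P : E ⥤ B}

lemma isPSplit_id (e : E) : IsPSplit P e (𝟙 (P.obj e)) (𝟙 (P.obj e)) :=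
  ⟨Category.id_comp _, Relation.ReflTransGen.single (Or.inl ⟨⟨𝟙 e, by simp, by simp⟩⟩)⟩

def SplitLift.ofHom {d e : E} (f : d ⟶ e) {g : P.obj d ⟶ P.obj e} (hf : P.map f = g) :
    SplitLift P g (𝟙 (P.obj d)) (𝟙 _) (𝟙 (P.obj e)) (𝟙 _) :=
  ⟨d, e, 𝟙 d, 𝟙 d, f, 𝟙 e, 𝟙 e, rfl, rfl, by simp, by simp, by simp [hf], by simp, by simp,
    by simp⟩

namespace IsDSB

variable (hP : IsDSB P)
include hP

lemma splitLift_eq {b c : B} {g : b ⟶ c} {e e' : E} {h : b ⟶ P.obj e} {k : P.obj e ⟶ b}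
    {h' : c ⟶ P.obj e'} {k' : P.obj e' ⟶ c} (hsp : IsPSplit P e h k) (hsp' : IsPSplit P e' h' k')
    (hz : Zigzag (J := FactObj P g)
      ⟨e, h, k ≫ g, by rw [← Category.assoc, hsp.1, Category.id_comp]⟩
      ⟨e', g ≫ h', k', by rw [Category.assoc, hsp'.1, Category.comp_id]⟩)
    (L₁ L₂ : SplitLift P g h k h' k') : L₁ = L₂ := by
  obtain ⟨L, hL⟩ := hP g h k h' k' hsp hsp' hz
  rw [hL L₁, hL L₂]

lemma map_injective {d e : E} : Function.Injective (P.map : (d ⟶ e) → _) := by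
  intro f₁ f₂ hf
  have hL := hP.splitLift_eq (isPSplit_id d) (isPSplit_id e)
    (Relation.ReflTransGen.single (Or.inl ⟨⟨f₁, by simp, by simp⟩⟩))
    (SplitLift.ofHom f₁ rfl) (SplitLift.ofHom f₂ hf.symm)
  simp only [SplitLift.ofHom, SplitLift.mk.injEq, heq_eq_eq, true_and] at hL
  exact hL.1

lemma faithful : P.Faithful :=
  ⟨fun h => hP.map_injective h⟩

lemma exists_map_eq_inv {d e : E} (f : d ⟶ e) [IsIso (P.map f)] :
    ∃ m : e ⟶ d, P.map m = inv (P.map f) := by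
  obtain ⟨L, -⟩ := hP (inv (P.map f)) (𝟙 _) (𝟙 _) (𝟙 _) (𝟙 _)
    (isPSplit_id e) (isPSplit_id d)
    (Relation.ReflTransGen.single (Or.inr ⟨⟨f, by simp, by simp⟩⟩))
  exact ⟨L.k₀ ≫ L.g₀ ≫ L.h₀', by simp [L.map_k₀, L.map_g₀, L.map_h₀']⟩

lemma isIso_of_isIso_map {d e : E} (f : d ⟶ e) [IsIso (P.map f)] : IsIso f := by
  obtain ⟨m, hm⟩ := hP.exists_map_eq_inv f
  exact ⟨m, hP.map_injective (by simp [hm]), hP.map_injective (by simp [hm])⟩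

lemma reflectsIsomorphisms : P.ReflectsIsomorphisms :=
  ⟨fun f _ => hP.isIso_of_isIso_map f⟩

lemma eq_eqToHom_of_map_eq_eqToHom {d e : E} (f : d ⟶ e) (hde : P.obj d = P.obj e)
    (hf : P.map f = eqToHom hde) : ∃ h : d = e, f = eqToHom h := by
  have : IsIso (P.map f) := by rw [hf]; infer_instance
  have : IsIso f := hP.isIso_of_isIso_map f
  have hL := hP.splitLift_eq (isPSplit_id d) (isPSplit_id d)
    (Relation.ReflTransGen.single (Or.inl ⟨⟨𝟙 d, by simp, by simp⟩⟩))
    (SplitLift.ofHom (𝟙 d) (P.map_id d))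
    ⟨d, e, 𝟙 d, 𝟙 d, f, inv f, f, rfl, hde.symm, by simp, by simp, by simp [hf],
      by simp [hf], by simp [hf], by simp⟩
  simp only [SplitLift.ofHom, SplitLift.mk.injEq, true_and] at hL
  obtain ⟨rfl, -, -, hid, -⟩ := hL
  exact ⟨rfl, eq_of_heq hid.symm⟩

end IsDSB

end CategoryTheory

open CategoryTheory in
/-- Every discrete splitting bifibration is faithful, conservative, and reflects
identities. -/
theorem isDSB_faithful_conservative_reflects_id {E B : Type u}
    [Category.{u} E] [Category.{u} B] (P : E ⥤ B) (hP : IsDSB P) :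
    P.Faithful ∧ P.ReflectsIsomorphisms ∧
      (∀ {d e : E} (f : d ⟶ e) (hde : P.obj d = P.obj e),
        P.map f = eqToHom hde → ∃ h : d = e, f = eqToHom h) :=
  ⟨hP.faithful, hP.reflectsIsomorphisms, hP.eq_eqToHom_of_map_eq_eqToHom⟩
end
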